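/- arXiv:1204.1038 — 2 statements merged into one kernel-verified Lean document; each statement's English description precedes it below -/
import Mathlib

section
/- Let a > 0 and let (u,v) be a solution of the one-dimensional system u'' = u v², v'' = v u², u > 0, v > 0 on ℝ, satisfying u'(x) → a as x → +∞ and v'(x) → −a as x → −∞. Then there exists a constant A > 0 such that |u(x) − a·max(x,0)| + |v(x) − a·max(−x,0)| ≤ A for every x ∈ ℝ. Moreover, the limits lim_{x→+∞} (u(x) − a x) and lim_{x→−∞} (v(x) + a x) exist and are finite. -/
/-!
As `u'', v'' ≥ 0`, both derivatives are nondecreasing. A positive value of `v'` would make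
`u'' = u v²` blow up, so `v' ≤ 0` and, symmetrically, `0 ≤ u' ≤ a`. On `[0, ∞)` we then have
`u ≥ c := u 0`, so `v'' ≥ c² v`; since `v'` stays nonpositive this forces `v' ≤ -c v`, i.e.
exponential decay of `v`. Hence `u'' = u v²` is exponentially small, and `u - a x` is
nonincreasing with `a - u'` integrable, so it is bounded and converges. The behaviour of `v`
at `-∞` is the same statement for the reflected solution `(v(-x), u(-x))`.
-/

open Filter

/-- A solution of the one-dimensional system `u'' = u v²`, `v'' = v u²`, `u, v > 0` on `ℝ`. -/
def IsSol1D (u v : ℝ → ℝ) : Prop :=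
  Differentiable ℝ u ∧ Differentiable ℝ (deriv u) ∧
  Differentiable ℝ v ∧ Differentiable ℝ (deriv v) ∧
  (∀ x, 0 < u x) ∧ (∀ x, 0 < v x) ∧
  (∀ x, deriv (deriv u) x = u x * v x ^ 2) ∧
  (∀ x, deriv (deriv v) x = v x * u x ^ 2)

open Set Real Topology

section Comparison

variable {f g f' g' : ℝ → ℝ}

theorem sub_le_sub_of_hasDerivAt_le {s : ℝ} (hf : ∀ x, HasDerivAt f (f' x) x)
    (hg : ∀ x, HasDerivAt g (g' x) x) (h : ∀ x, s ≤ x → f' x ≤ g' x) {x y : ℝ} (hsx : s ≤ x)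
    (hxy : x ≤ y) : f y - f x ≤ g y - g x := by
  have hanti : AntitoneOn (fun t => f t - g t) (Ici s) :=
    antitoneOn_of_hasDerivWithinAt_nonpos (convex_Ici s)
      (fun t _ => ((hf t).sub (hg t)).continuousAt.continuousWithinAt)
      (fun t _ => ((hf t).sub (hg t)).hasDerivWithinAt)
      (fun t ht => sub_nonpos.2 (h t (interior_Ici.subset ht).le))
  linarith [hanti hsx (hsx.trans hxy) hxy]

theorem tendsto_atTop_of_eventually_le_deriv (hf : Differentiable ℝ f) {s : ℝ} (hs : 0 < s)
    (h : ∀ᶠ x in atTop, s ≤ deriv f x) : Tendsto f atTop atTop := by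
  obtain ⟨x₀, hx₀⟩ := eventually_atTop.1 h
  have hlin : Tendsto (fun x => s * (x - x₀) + f x₀) atTop atTop :=
    tendsto_atTop_add_const_right _ _
      ((tendsto_atTop_add_const_right _ _ tendsto_id).const_mul_atTop hs)
  refine tendsto_atTop_mono' _ ((eventually_ge_atTop x₀).mono fun x hx => ?_) hlin
  have := sub_le_sub_of_hasDerivAt_le (fun t => (hasDerivAt_id' t).const_mul s)
    (fun t => (hf t).hasDerivAt) (fun t ht => by simpa using hx₀ t ht) le_rfl hx
  linarith

theorem le_mul_exp_of_deriv_le (hf : Differentiable ℝ f) {k s : ℝ}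
    (h : ∀ x, s ≤ x → deriv f x ≤ k * f x) {x : ℝ} (hx : s ≤ x) :
    f x ≤ f s * exp (k * (x - s)) := by
  have := le_gronwallBound_of_liminf_deriv_right_le (ε := 0) (b := x)
    hf.continuous.continuousOn
    (fun y _ r hr => (hf y).hasDerivAt.hasDerivWithinAt.liminf_right_slope_le hr) le_rfl
    (fun y hy => by simpa using h y hy.1) x ⟨hx, le_rfl⟩
  rwa [gronwallBound_ε0] at this

theorem mul_exp_le_of_le_deriv (hf : Differentiable ℝ f) {k s : ℝ}
    (h : ∀ x, s ≤ x → k * f x ≤ deriv f x) {x : ℝ} (hx : s ≤ x) :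
    f s * exp (k * (x - s)) ≤ f x := by
  have := le_mul_exp_of_deriv_le (f := fun t => -f t) (k := k) hf.neg
    (fun t ht => by rw [deriv.fun_neg]; linarith [h t ht]) hx
  linarith

/-- `w = f' + c f` satisfies `w' ≥ c w`, so it would grow exponentially once positive, whereas
`w ≤ c f ≤ c f(s)`. -/
theorem deriv_le_neg_mul_of_sq_mul_le_deriv_deriv (hf : Differentiable ℝ f)
    (hf' : Differentiable ℝ (deriv f)) {c s : ℝ} (hc : 0 < c) (hd : ∀ x, s ≤ x → deriv f x ≤ 0)
    (hdd : ∀ x, s ≤ x → c ^ 2 * f x ≤ deriv (deriv f) x) {x : ℝ} (hx : s ≤ x) :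
    deriv f x ≤ -c * f x := by
  set w := fun t => deriv f t + c * f t with hw
  have hw' : ∀ t, HasDerivAt w (deriv (deriv f) t + c * deriv f t) t :=
    fun t => (hf' t).hasDerivAt.add ((hf t).hasDerivAt.const_mul c)
  have hw_grow : ∀ y, x ≤ y → w x * exp (c * (y - x)) ≤ w y := fun y hy =>
    mul_exp_le_of_le_deriv (fun t => (hw' t).differentiableAt)
      (fun t ht => by rw [(hw' t).deriv]; nlinarith [hdd t (hx.trans ht)]) hy
  have hw_le : ∀ y, s ≤ y → w y ≤ c * f s := fun y hy => by
    have := sub_le_sub_of_hasDerivAt_le (fun t => (hf t).hasDerivAt)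
      (fun t => hasDerivAt_const t (0 : ℝ)) hd le_rfl hy
    nlinarith [hd y hy]
  by_contra! hpos
  have hw_top : Tendsto (fun y => w x * exp (c * (y - x))) atTop atTop :=
    (tendsto_exp_atTop.comp ((tendsto_atTop_add_const_right _ _ tendsto_id).const_mul_atTop
      hc)).const_mul_atTop (by simp only [hw]; linarith)
  obtain ⟨y, hy_big, hxy⟩ :=
    ((hw_top.eventually_gt_atTop (c * f s)).and (eventually_ge_atTop x)).exists
  linarith [hw_grow y hxy, hw_le y (hx.trans hxy)]

theorem le_sub_mul_of_deriv_deriv_le_exp (hf : Differentiable ℝ f)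
    (hf' : Differentiable ℝ (deriv f)) {a K c : ℝ} (hK : 0 ≤ K) (hc : 0 < c)
    (hlim : Tendsto (deriv f) atTop (𝓝 a))
    (hdd : ∀ x, 0 ≤ x → deriv (deriv f) x ≤ K * exp (-c * x)) {x : ℝ} (hx : 0 ≤ x) :
    f 0 - K / c ^ 2 ≤ f x - a * x := by
  have hexp : ∀ t, HasDerivAt (fun t => exp (-c * t)) (exp (-c * t) * (-c)) t := fun t => by
    simpa using ((hasDerivAt_id t).const_mul (-c)).exp
  have hdf : ∀ t, 0 ≤ t → a - K / c * exp (-c * t) ≤ deriv f t := by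
    intro t ht
    suffices a - deriv f t ≤ K / c * exp (-c * t) by linarith
    refine le_of_tendsto (hlim.sub_const (deriv f t)) ((eventually_ge_atTop t).mono fun y hy => ?_)
    have := sub_le_sub_of_hasDerivAt_le (fun t => (hf' t).hasDerivAt)
      (fun z => (hexp z).const_mul (-(K / c)))
      (fun z hz => by
        have : -(K / c) * (exp (-c * z) * -c) = K * exp (-c * z) := by field_simp
        linarith [hdd z hz]) ht hy
    nlinarith [exp_pos (-c * y), div_nonneg hK hc.le]
  have := sub_le_sub_of_hasDerivAt_le
    (fun t => ((hasDerivAt_id' t).const_mul a).fun_add ((hexp t).const_mul (K / c ^ 2)))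
    (fun t => (hf t).hasDerivAt)
    (fun t ht => by
      have : K / c ^ 2 * (exp (-c * t) * -c) = -(K / c * exp (-c * t)) := by field_simp
      linarith [hdf t ht]) le_rfl hx
  simp only [mul_zero, exp_zero, mul_one, zero_add] at this
  nlinarith [exp_pos (-c * x), div_nonneg hK (sq_nonneg c)]

end Comparison

theorem tendsto_deriv_comp_neg_atTop {f : ℝ → ℝ} {a : ℝ}
    (hf : Tendsto (deriv f) atBot (𝓝 (-a))) :
    Tendsto (deriv fun x => f (-x)) atTop (𝓝 a) := by
  simpa [funext fun x => deriv_comp_neg f x] using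
    (hf.comp tendsto_neg_atTop_atBot).neg

theorem tendsto_deriv_comp_neg_atBot {f : ℝ → ℝ} {a : ℝ}
    (hf : Tendsto (deriv f) atTop (𝓝 a)) :
    Tendsto (deriv fun x => f (-x)) atBot (𝓝 (-a)) := by
  simpa [funext fun x => deriv_comp_neg f x] using
    (hf.comp tendsto_neg_atBot_atTop).neg

namespace IsSol1D

variable {u v : ℝ → ℝ} {a : ℝ}

theorem symm (h : IsSol1D u v) : IsSol1D v u :=
  let ⟨hu, hu', hv, hv', hu0, hv0, hu'', hv''⟩ := h
  ⟨hv, hv', hu, hu', hv0, hu0, hv'', hu''⟩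

theorem reflect (h : IsSol1D u v) : IsSol1D (fun x => v (-x)) (fun x => u (-x)) := by
  obtain ⟨hu, hu', hv, hv', hu0, hv0, hu'', hv''⟩ := h
  have hderiv : ∀ f : ℝ → ℝ, deriv (fun x => f (-x)) = fun x => -deriv f (-x) :=
    fun f => funext fun x => deriv_comp_neg f x
  refine ⟨hv.comp differentiable_neg, ?_, hu.comp differentiable_neg, ?_, fun x => hv0 _,
    fun x => hu0 _, fun x => ?_, fun x => ?_⟩
  · rw [hderiv]; exact (hv'.comp differentiable_neg).neg
  · rw [hderiv]; exact (hu'.comp differentiable_neg).neg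
  · rw [hderiv, deriv.fun_neg, deriv_comp_neg _ x, neg_neg, hv'']
  · rw [hderiv, deriv.fun_neg, deriv_comp_neg _ x, neg_neg, hu'']

theorem monotone_deriv (h : IsSol1D u v) : Monotone (deriv u) := by
  obtain ⟨-, hud', -, -, hupos, -, huE, -⟩ := h
  exact monotone_of_deriv_nonneg hud' fun x => by
    rw [huE]; exact mul_nonneg (hupos x).le (sq_nonneg _)

/-- If `v'(x) > 0`, then `v` and (as `u' → a > 0`) `u` tend to `∞`, hence so does `u'' = u v²`,
which is incompatible with `u'` having a finite limit. -/
theorem deriv_snd_nonpos (h : IsSol1D u v) (ha : 0 < a) (hu : Tendsto (deriv u) atTop (𝓝 a))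
    (x : ℝ) : deriv v x ≤ 0 := by
  by_contra! hx
  obtain ⟨hud, hud', hvd, -, -, -, huE, -⟩ := id h
  have hu_top : Tendsto u atTop atTop := tendsto_atTop_of_eventually_le_deriv hud (half_pos ha)
    ((hu.eventually (lt_mem_nhds (half_lt_self ha))).mono fun _ => le_of_lt)
  have hv_top : Tendsto v atTop atTop := tendsto_atTop_of_eventually_le_deriv hvd hx
    ((eventually_ge_atTop x).mono fun _ hy => h.symm.monotone_deriv hy)
  have hu''_top : Tendsto (deriv (deriv u)) atTop atTop := by
    rw [funext huE]
    exact hu_top.atTop_mul_atTop₀ ((tendsto_pow_atTop two_ne_zero).comp hv_top)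
  exact not_tendsto_nhds_of_tendsto_atTop
    (tendsto_atTop_of_eventually_le_deriv hud' one_pos (hu''_top.eventually_ge_atTop 1)) a hu

/-- With `c = u 0 ≤ u` on `[0, ∞)`, `v'' ≥ c² v` forces `v ≤ v 0 · e^{-cx}`, while `u` grows at
most linearly. -/
theorem deriv_deriv_le_exp (h : IsSol1D u v) (ha : 0 < a) (hua : ∀ x, deriv u x ≤ a)
    (hu0 : ∀ x, 0 ≤ deriv u x) (hv0 : ∀ x, deriv v x ≤ 0) :
    ∃ K c, 0 ≤ K ∧ 0 < c ∧ ∀ x, 0 ≤ x → deriv (deriv u) x ≤ K * exp (-c * x) := by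
  obtain ⟨hud, -, hvd, hvd', hupos, hvpos, huE, hvE⟩ := h
  set c := u 0
  have hc : 0 < c := hupos 0
  have hv_exp : ∀ x, 0 ≤ x → v x ≤ v 0 * exp (-c * x) := by
    intro x hx
    have hv' : ∀ t, 0 ≤ t → deriv v t ≤ -c * v t :=
      fun t => deriv_le_neg_mul_of_sq_mul_le_deriv_deriv hvd hvd' hc (fun t _ => hv0 t)
        (fun t ht => by
          have hct : c ≤ u t := monotone_of_deriv_nonneg hud hu0 ht
          rw [hvE, mul_comm]
          gcongr
          exact (hvpos t).le)
    simpa using le_mul_exp_of_deriv_le hvd hv' hx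
  have hu_exp : ∀ x, 0 ≤ x → u x ≤ (c + a / c) * exp (c * x) := by
    intro x hx
    have hlin := sub_le_sub_of_hasDerivAt_le (fun t => (hud t).hasDerivAt)
      (fun t => (hasDerivAt_id' t).const_mul a) (fun t _ => by simpa using hua t) le_rfl hx
    calc u x ≤ (c + a / c) * (c * x + 1) := by
          have : (c + a / c) * (c * x + 1) = c + a * x + (c * c * x + a / c) := by
            field_simp
            ring
          nlinarith [div_pos ha hc]
      _ ≤ (c + a / c) * exp (c * x) := by gcongr; exact add_one_le_exp _
  refine ⟨(c + a / c) * v 0 ^ 2, c, by positivity, hc, fun x hx => ?_⟩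
  have hexp : exp (c * x) * exp (-c * x) = 1 := by rw [← exp_add]; simp
  calc deriv (deriv u) x = u x * v x ^ 2 := huE x
    _ ≤ (c + a / c) * exp (c * x) * (v 0 * exp (-c * x)) ^ 2 := by
        gcongr
        · exact hu_exp x hx
        · exact (hvpos x).le
        · exact hv_exp x hx
    _ = (c + a / c) * v 0 ^ 2 * exp (-c * x) := by
        linear_combination (c + a / c) * v 0 ^ 2 * exp (-c * x) * hexp

theorem exists_abs_sub_le_and_tendsto (h : IsSol1D u v) (ha : 0 < a)
    (hu : Tendsto (deriv u) atTop (𝓝 a)) (hv : Tendsto (deriv v) atBot (𝓝 (-a))) :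
    (∃ C, ∀ x, |u x - a * max x 0| ≤ C) ∧ ∃ L, Tendsto (fun x => u x - a * x) atTop (𝓝 L) := by
  obtain ⟨hud, hud', -, -, hupos, -⟩ := id h
  have hua : ∀ x, deriv u x ≤ a := h.monotone_deriv.ge_of_tendsto hu
  have hu0 : ∀ x, 0 ≤ deriv u x := fun x => by
    simpa [deriv_comp_neg] using
      h.reflect.deriv_snd_nonpos ha (tendsto_deriv_comp_neg_atTop hv) (-x)
  obtain ⟨K, c, hK, hc, hdd⟩ := h.deriv_deriv_le_exp ha hua hu0 (h.deriv_snd_nonpos ha hu)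
  have hlow : ∀ x, 0 ≤ x → u 0 - K / c ^ 2 ≤ u x - a * x :=
    fun x => le_sub_mul_of_deriv_deriv_le_exp hud hud' hK hc hu hdd
  have hanti : Antitone fun x => u x - a * x := antitone_of_deriv_nonpos
    (hud.sub (differentiable_id.const_mul a)) fun x => by
      rw [((hud x).hasDerivAt.fun_sub ((hasDerivAt_id' x).const_mul a)).deriv]
      linarith [hua x]
  refine ⟨⟨max (u 0) (K / c ^ 2 - u 0), fun x => ?_⟩,
    ⨅ x, u x - a * x, tendsto_atTop_ciInf hanti ⟨u 0 - K / c ^ 2, ?_⟩⟩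
  · rcases le_total 0 x with hx | hx
    · have := hanti hx
      rw [max_eq_left hx, abs_le]
      constructor <;> linarith [le_max_left (u 0) (K / c ^ 2 - u 0),
        le_max_right (u 0) (K / c ^ 2 - u 0), hlow x hx]
    · rw [max_eq_right hx, mul_zero, sub_zero, abs_of_pos (hupos x)]
      exact (monotone_of_deriv_nonneg hud hu0 hx).trans (le_max_left _ _)
  · rintro _ ⟨x, rfl⟩
    rcases le_total 0 x with hx | hx
    · exact hlow x hx
    · linarith [hlow 0 le_rfl, hanti hx]

end IsSol1D

/-- A solution with `u' → a` at `+∞` and `v' → −a` at `−∞` stays at bounded distance from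
the profile `(a·x⁺, a·x⁻)`, and the corrections converge at the respective infinities. -/
theorem linear_asymptotics_1D (a : ℝ) (ha : 0 < a) (u v : ℝ → ℝ) (h : IsSol1D u v)
    (hu : Tendsto (deriv u) atTop (nhds a))
    (hv : Tendsto (deriv v) atBot (nhds (-a))) :
    (∃ A : ℝ, 0 < A ∧
      ∀ x : ℝ, |u x - a * max x 0| + |v x - a * max (-x) 0| ≤ A) ∧
    (∃ L₁ : ℝ, Tendsto (fun x => u x - a * x) atTop (nhds L₁)) ∧
    (∃ L₂ : ℝ, Tendsto (fun x => v x + a * x) atBot (nhds L₂)) := by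
  obtain ⟨⟨C₁, hC₁⟩, L₁, hL₁⟩ := h.exists_abs_sub_le_and_tendsto ha hu hv
  obtain ⟨⟨C₂, hC₂⟩, L₂, hL₂⟩ := h.reflect.exists_abs_sub_le_and_tendsto ha
    (tendsto_deriv_comp_neg_atTop hv) (tendsto_deriv_comp_neg_atBot hu)
  refine ⟨⟨|C₁| + |C₂| + 1, by positivity, fun x => ?_⟩, ⟨L₁, hL₁⟩, ⟨L₂, ?_⟩⟩
  · have := hC₂ (-x)
    simp only [neg_neg] at this
    linarith [hC₁ x, le_abs_self C₁, le_abs_self C₂]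
  · refine (hL₂.comp tendsto_neg_atBot_atTop).congr fun x => ?_
    simp
end

section
/- Let (u,v) be a solution of the system Δu = u v², Δv = v u², u > 0, v > 0 on ℝ² satisfying the linear growth bound u(x) + v(x) ≤ C₀(1 + |x|) for all x ∈ ℝ² and some constant C₀ > 0. Then there exists a constant C > 0 such that for every r ≥ 1, ∫_{B_r(0)} (|∇u|² + |∇v|²) dx ≤ C r². -/
open MeasureTheory

noncomputable abbrev E2 := EuclideanSpace ℝ (Fin 2)

/-- The Laplacian of `u : ℝ² → ℝ`: the sum of the second partial derivatives. -/
noncomputable def lap (u : E2 → ℝ) (x : E2) : ℝ :=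
  ∑ i : Fin 2, fderiv ℝ (fun y => fderiv ℝ u y (EuclideanSpace.single i 1)) x
      (EuclideanSpace.single i 1)

/-- A solution of the system `Δu = u v²`, `Δv = v u²`, `u, v > 0` on `ℝ²`. -/
def IsSol (u v : E2 → ℝ) : Prop :=
  ContDiff ℝ 2 u ∧ ContDiff ℝ 2 v ∧ (∀ x, 0 < u x) ∧ (∀ x, 0 < v x) ∧
  (∀ x, lap u x = u x * v x ^ 2) ∧ (∀ x, lap v x = v x * u x ^ 2)

/-!
With `w = u² + v²` the system gives `Δw = 2 (|∇u|² + |∇v|²) + 4 u²v²`, so the energy density is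
at most `Δw / 2`. Testing `Δw ≥ 0` against a cutoff `φ` that is `1` on `B_r`, supported in
`B_{2r}` and has `|Δφ| ≲ r⁻²`, and moving the Laplacian onto `φ` by integrating by parts twice,
gives `∫_{B_r} Δw ≤ ∫ w Δφ ≲ sup_{B_{2r}} w`, which is `O(r²)` by the linear growth of `u + v`.
-/

open Metric

section SecondDirectionalDerivative

variable {E : Type*} [NormedAddCommGroup E] [NormedSpace ℝ E] {f g : E → ℝ}

lemma ContDiff.fderiv_apply_right (hf : ContDiff ℝ 2 f) (v : E) :
    ContDiff ℝ 1 (fun y => fderiv ℝ f y v) :=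
  (hf.fderiv_right one_add_one_eq_two.le).clm_apply contDiff_const

lemma ContDiff.continuous_fderiv_fderiv_apply (hf : ContDiff ℝ 2 f) (v : E) :
    Continuous fun x => fderiv ℝ (fun y => fderiv ℝ f y v) x v :=
  ((hf.fderiv_apply_right v).continuous_fderiv one_ne_zero).clm_apply continuous_const

lemma fderiv_fderiv_apply_add (hf : ContDiff ℝ 2 f) (hg : ContDiff ℝ 2 g) (v x : E) :
    fderiv ℝ (fun y => fderiv ℝ (fun z => f z + g z) y v) x v =
      fderiv ℝ (fun y => fderiv ℝ f y v) x v + fderiv ℝ (fun y => fderiv ℝ g y v) x v := by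
  have hfg : (fun y => fderiv ℝ (fun z => f z + g z) y v) =
      fun y => fderiv ℝ f y v + fderiv ℝ g y v := by
    funext y
    rw [fderiv_fun_add (hf.differentiable two_ne_zero y) (hg.differentiable two_ne_zero y)]
    rfl
  rw [hfg, fderiv_fun_add ((hf.fderiv_apply_right v).differentiable one_ne_zero x)
    ((hg.fderiv_apply_right v).differentiable one_ne_zero x)]
  rfl

lemma fderiv_fderiv_apply_mul (hf : ContDiff ℝ 2 f) (hg : ContDiff ℝ 2 g) (v x : E) :
    fderiv ℝ (fun y => fderiv ℝ (fun z => f z * g z) y v) x v =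
      f x * fderiv ℝ (fun y => fderiv ℝ g y v) x v +
        g x * fderiv ℝ (fun y => fderiv ℝ f y v) x v + 2 * (fderiv ℝ f x v * fderiv ℝ g x v) := by
  have hfd := hf.differentiable two_ne_zero
  have hgd := hg.differentiable two_ne_zero
  have hfg : (fun y => fderiv ℝ (fun z => f z * g z) y v) =
      fun y => f y * fderiv ℝ g y v + g y * fderiv ℝ f y v := by
    funext y
    rw [fderiv_fun_mul (hfd y) (hgd y)]
    simp only [add_apply, smul_apply, smul_eq_mul]
  have hf' := ((hf.fderiv_apply_right v).differentiable one_ne_zero x)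
  have hg' := ((hg.fderiv_apply_right v).differentiable one_ne_zero x)
  rw [hfg, (((hfd x).hasFDerivAt.fun_mul hg'.hasFDerivAt).fun_add
    ((hgd x).hasFDerivAt.fun_mul hf'.hasFDerivAt)).fderiv]
  simp only [add_apply, smul_apply, smul_eq_mul]
  ring

lemma fderiv_fderiv_apply_comp_smul (hf : ContDiff ℝ 2 f) (c : ℝ) (v x : E) :
    fderiv ℝ (fun y => fderiv ℝ (fun z => f (c • z)) y v) x v =
      c ^ 2 * fderiv ℝ (fun y => fderiv ℝ f y v) (c • x) v := by
  have hfg : (fun y => fderiv ℝ (fun z => f (c • z)) y v) =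
      fun y => c * fderiv ℝ f (c • y) v := by
    funext y
    rw [fderiv_comp_smul]
    rfl
  have hf' := (hf.fderiv_apply_right v).differentiable one_ne_zero
  have hf'c : DifferentiableAt ℝ (fun y => fderiv ℝ f (c • y) v) x :=
    (hf' (c • x)).comp x (differentiableAt_id.const_smul c)
  rw [hfg, fderiv_const_mul hf'c, fderiv_comp_smul (f := fun y => fderiv ℝ f y v)]
  simp only [smul_apply, smul_eq_mul]
  ring

variable [FiniteDimensional ℝ E] [MeasurableSpace E] [BorelSpace E] (μ : Measure E)
  [μ.IsAddHaarMeasure]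

lemma integral_mul_fderiv_fderiv_apply_comm {w φ : E → ℝ} (hw : ContDiff ℝ 2 w)
    (hφ : ContDiff ℝ 2 φ) (hφs : HasCompactSupport φ) (v : E) :
    ∫ x, φ x * fderiv ℝ (fun y => fderiv ℝ w y v) x v ∂μ =
      ∫ x, w x * fderiv ℝ (fun y => fderiv ℝ φ y v) x v ∂μ := by
  have hw' := hw.fderiv_apply_right v
  have hφ' := hφ.fderiv_apply_right v
  have hw'' := hw.continuous_fderiv_fderiv_apply v
  have hφ'' := hφ.continuous_fderiv_fderiv_apply v
  have hφ's : HasCompactSupport (fun y => fderiv ℝ φ y v) := hφs.fderiv_apply ℝ v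
  have hφ''s := hφ's.fderiv_apply ℝ v
  have h₁ : ∫ x, φ x * fderiv ℝ (fun y => fderiv ℝ w y v) x v ∂μ =
      -∫ x, fderiv ℝ φ x v * fderiv ℝ w x v ∂μ :=
    integral_mul_fderiv_eq_neg_fderiv_mul_of_integrable
      ((hφ'.continuous.mul hw'.continuous).integrable_of_hasCompactSupport hφ's.mul_right)
      ((hφ.continuous.mul hw'').integrable_of_hasCompactSupport hφs.mul_right)
      ((hφ.continuous.mul hw'.continuous).integrable_of_hasCompactSupport hφs.mul_right)
      (fun x _ => hφ.differentiable two_ne_zero x) (fun x _ => hw'.differentiable one_ne_zero x)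
  have h₂ : ∫ x, w x * fderiv ℝ (fun y => fderiv ℝ φ y v) x v ∂μ =
      -∫ x, fderiv ℝ w x v * fderiv ℝ φ x v ∂μ :=
    integral_mul_fderiv_eq_neg_fderiv_mul_of_integrable
      ((hw'.continuous.mul hφ'.continuous).integrable_of_hasCompactSupport hφ's.mul_left)
      ((hw.continuous.mul hφ'').integrable_of_hasCompactSupport hφ''s.mul_left)
      ((hw.continuous.mul hφ'.continuous).integrable_of_hasCompactSupport hφ's.mul_left)
      (fun x _ => hw.differentiable two_ne_zero x) (fun x _ => hφ'.differentiable one_ne_zero x)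
  simp only [h₁, h₂, mul_comm]

end SecondDirectionalDerivative

lemma ContinuousLinearMap.norm_sq_eq_sum_sq_apply {ι E : Type*} [Fintype ι]
    [NormedAddCommGroup E] [InnerProductSpace ℝ E] [CompleteSpace E]
    (b : OrthonormalBasis ι ℝ E) (f : E →L[ℝ] ℝ) :
    ‖f‖ ^ 2 = ∑ i, f (b i) ^ 2 := by
  rw [← (InnerProductSpace.toDual ℝ E).symm.norm_map f, ← b.sum_sq_inner_right]
  refine Finset.sum_congr rfl fun i _ => ?_
  rw [real_inner_comm, InnerProductSpace.toDual_symm_apply]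

lemma ContDiff.continuous_lap {f : E2 → ℝ} (hf : ContDiff ℝ 2 f) : Continuous (lap f) :=
  continuous_finsetSum _ fun _ _ => hf.continuous_fderiv_fderiv_apply _

lemma support_lap_subset (f : E2 → ℝ) : Function.support (lap f) ⊆ tsupport f :=
  fun x hx => by
    obtain ⟨i, -, hi⟩ := Finset.exists_ne_zero_of_sum_ne_zero hx
    exact (tsupport_fderiv_apply_subset ℝ _).trans (tsupport_fderiv_apply_subset ℝ _)
      (subset_tsupport _ hi)

lemma lap_add {f g : E2 → ℝ} (hf : ContDiff ℝ 2 f) (hg : ContDiff ℝ 2 g) (x : E2) :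
    lap (fun y => f y + g y) x = lap f x + lap g x := by
  simp only [lap, fderiv_fderiv_apply_add hf hg, Finset.sum_add_distrib]

lemma lap_sq {f : E2 → ℝ} (hf : ContDiff ℝ 2 f) (x : E2) :
    lap (fun y => f y ^ 2) x = 2 * f x * lap f x + 2 * ‖fderiv ℝ f x‖ ^ 2 := by
  simp only [sq, lap, fderiv_fderiv_apply_mul hf hf,
    (fderiv ℝ f x).norm_sq_eq_sum_sq_apply (EuclideanSpace.basisFun (Fin 2) ℝ),
    EuclideanSpace.basisFun_apply, Finset.mul_sum, ← Finset.sum_add_distrib]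
  exact Finset.sum_congr rfl fun i _ => by ring

lemma lap_comp_smul {f : E2 → ℝ} (hf : ContDiff ℝ 2 f) (c : ℝ) (x : E2) :
    lap (fun y => f (c • y)) x = c ^ 2 * lap f (c • x) := by
  simp only [lap, fderiv_fderiv_apply_comp_smul hf, Finset.mul_sum]

lemma integral_mul_lap_comm {w φ : E2 → ℝ} (hw : ContDiff ℝ 2 w) (hφ : ContDiff ℝ 2 φ)
    (hφs : HasCompactSupport φ) :
    ∫ x, φ x * lap w x = ∫ x, w x * lap φ x := by
  simp only [lap, Finset.mul_sum]
  rw [integral_finsetSum _ fun i _ => ?_, integral_finsetSum _ fun i _ => ?_]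
  · exact Finset.sum_congr rfl fun i _ =>
      integral_mul_fderiv_fderiv_apply_comm volume hw hφ hφs _
  · exact (hw.continuous.mul (hφ.continuous_fderiv_fderiv_apply _))
      |>.integrable_of_hasCompactSupport ((hφs.fderiv_apply ℝ _).fderiv_apply ℝ _).mul_left
  · exact (hφ.continuous.mul (hw.continuous_fderiv_fderiv_apply _))
      |>.integrable_of_hasCompactSupport hφs.mul_right

lemma exists_cutoff_with_lap_bound : ∃ K : ℝ, ∀ r : ℝ, 0 < r → ∃ φ : E2 → ℝ,
    ContDiff ℝ 2 φ ∧ tsupport φ ⊆ closedBall 0 (2 * r) ∧ (∀ x, 0 ≤ φ x) ∧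
      (∀ x ∈ ball 0 r, φ x = 1) ∧ ∀ x, r ^ 2 * |lap φ x| ≤ K := by
  let ψ : ContDiffBump (0 : E2) := ⟨1, 2, one_pos, one_lt_two⟩
  have hψ : ContDiff ℝ 2 ψ := ψ.contDiff
  obtain ⟨K, hK⟩ := hψ.continuous_lap.bounded_above_of_compact_support
    (ψ.hasCompactSupport.mono' (support_lap_subset ψ))
  refine ⟨K, fun r hr => ⟨fun x => ψ (r⁻¹ • x), hψ.comp (contDiff_id.const_smul r⁻¹), ?_,
    fun x => ψ.nonneg, fun x hx => ψ.one_of_mem_closedBall ?_, fun x => ?_⟩⟩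
  · refine closure_minimal ?_ isClosed_closedBall
    rw [support_comp_inv_smul₀ hr.ne', ψ.support_eq, _root_.smul_ball hr.ne', smul_zero,
      Real.norm_of_nonneg hr.le, mul_comm]
    exact ball_subset_closedBall
  · rw [mem_ball_zero_iff] at hx
    rw [mem_closedBall_zero_iff, norm_smul, Real.norm_of_nonneg (inv_nonneg.2 hr.le),
      inv_mul_le_iff₀ hr, mul_one]
    exact hx.le
  · rw [lap_comp_smul hψ, abs_mul, abs_of_nonneg (by positivity), ← mul_assoc, ← mul_pow,
      mul_inv_cancel₀ hr.ne', one_pow, one_mul, ← Real.norm_eq_abs]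
    exact hK _

lemma exists_setIntegral_ball_lap_le : ∃ K : ℝ, 0 ≤ K ∧ ∀ (w : E2 → ℝ) (r M : ℝ),
    ContDiff ℝ 2 w → (∀ x, 0 ≤ lap w x) → 0 < r → (∀ x ∈ closedBall 0 (2 * r), |w x| ≤ M) →
      ∫ x in ball 0 r, lap w x ≤ K * M := by
  obtain ⟨K, hK⟩ := exists_cutoff_with_lap_bound
  have hK₀ : 0 ≤ K := by
    obtain ⟨φ, -, -, -, -, hφ⟩ := hK 1 one_pos
    exact le_trans (abs_nonneg _) (by simpa using hφ 0)
  refine ⟨K * volume.real (closedBall (0 : E2) 2), by positivity,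
    fun w r M hw hΔw hr hwM => ?_⟩
  obtain ⟨φ, hφ, hφsupp, hφ0, hφ1, hΔφ⟩ := hK r hr
  have hφs : HasCompactSupport φ :=
    (isCompact_closedBall 0 (2 * r)).of_isClosed_subset (isClosed_tsupport φ) hφsupp
  have hM : 0 ≤ M := (abs_nonneg _).trans (hwM 0 (mem_closedBall_self (by positivity)))
  have hvol : volume.real (closedBall (0 : E2) (2 * r)) =
      r ^ 2 * volume.real (closedBall (0 : E2) 2) := by
    simp only [Measure.addHaar_real_closedBall' _ _ (by positivity : (0 : ℝ) ≤ 2 * r),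
      Measure.addHaar_real_closedBall' _ _ zero_le_two, finrank_euclideanSpace_fin]
    ring
  calc ∫ x in ball 0 r, lap w x = ∫ x in ball 0 r, φ x * lap w x :=
        setIntegral_congr_fun measurableSet_ball fun x hx => by simp [hφ1 x hx]
    _ ≤ ∫ x, φ x * lap w x :=
        setIntegral_le_integral
          ((hφ.continuous.mul hw.continuous_lap).integrable_of_hasCompactSupport hφs.mul_right)
          (ae_of_all _ fun x => mul_nonneg (hφ0 x) (hΔw x))
    _ = ∫ x, w x * lap φ x := integral_mul_lap_comm hw hφ hφs
    _ = ∫ x in closedBall (0 : E2) (2 * r), w x * lap φ x := by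
        refine (setIntegral_eq_integral_of_forall_compl_eq_zero fun x hx => ?_).symm
        rw [Function.notMem_support.mp fun h => hx (hφsupp (support_lap_subset φ h)), mul_zero]
    _ ≤ ∫ _ in closedBall (0 : E2) (2 * r), M * (K / r ^ 2) := by
        refine setIntegral_mono_on ?_ (integrableOn_const measure_closedBall_lt_top.ne)
          measurableSet_closedBall fun x hx => ?_
        · exact (hw.continuous.mul hφ.continuous_lap).continuousOn.integrableOn_compact
            (isCompact_closedBall _ _)
        · have hΔφx : |lap φ x| ≤ K / r ^ 2 := by
            rw [le_div_iff₀ (by positivity), mul_comm]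
            exact hΔφ x
          calc w x * lap φ x ≤ |w x| * |lap φ x| := (le_abs_self _).trans (abs_mul _ _).le
            _ ≤ M * (K / r ^ 2) := mul_le_mul (hwM x hx) hΔφx (abs_nonneg _) hM
    _ = K * volume.real (closedBall (0 : E2) 2) * M := by
        rw [setIntegral_const, smul_eq_mul, hvol]
        field_simp

lemma IsSol.lap_sq_add_sq {u v : E2 → ℝ} (h : IsSol u v) (x : E2) :
    lap (fun y => u y ^ 2 + v y ^ 2) x =
      2 * (‖fderiv ℝ u x‖ ^ 2 + ‖fderiv ℝ v x‖ ^ 2) + 4 * (u x * v x) ^ 2 := by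
  obtain ⟨hu, hv, -, -, hΔu, hΔv⟩ := h
  rw [lap_add (hu.pow 2) (hv.pow 2), lap_sq hu, lap_sq hv, hΔu, hΔv]
  ring

lemma sq_add_sq_le_of_linear_growth {E : Type*} [SeminormedAddCommGroup E] {u v : E → ℝ}
    (hu : ∀ x, 0 ≤ u x) (hv : ∀ x, 0 ≤ v x) {C₀ : ℝ}
    (hgrowth : ∀ x, u x + v x ≤ C₀ * (1 + ‖x‖)) {r : ℝ} (hr : 1 ≤ r) {x : E}
    (hx : ‖x‖ ≤ 2 * r) : u x ^ 2 + v x ^ 2 ≤ 9 * C₀ ^ 2 * r ^ 2 := by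
  have hsum : (u x + v x) ^ 2 ≤ (C₀ * (1 + ‖x‖)) ^ 2 :=
    pow_le_pow_left₀ (add_nonneg (hu x) (hv x)) (hgrowth x) 2
  have hnorm : (1 + ‖x‖) ^ 2 ≤ (3 * r) ^ 2 :=
    pow_le_pow_left₀ (by positivity) (by linarith) 2
  nlinarith [mul_nonneg (hu x) (hv x), mul_le_mul_of_nonneg_left hnorm (sq_nonneg C₀)]

theorem dirichlet_energy_quadratic_bound_general (u v : E2 → ℝ) (hsol : IsSol u v)
    (C₀ : ℝ) (hgrowth : ∀ x : E2, u x + v x ≤ C₀ * (1 + ‖x‖)) :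
    ∃ C : ℝ, 0 < C ∧ ∀ r : ℝ, 1 ≤ r →
      (∫ x in Metric.ball (0 : E2) r, (‖fderiv ℝ u x‖ ^ 2 + ‖fderiv ℝ v x‖ ^ 2))
        ≤ C * r ^ 2 := by
  have hΔw := hsol.lap_sq_add_sq
  obtain ⟨hu, hv, hupos, hvpos, -⟩ := hsol
  obtain ⟨K, hK, hcaccioppoli⟩ := exists_setIntegral_ball_lap_le
  have hw : ContDiff ℝ 2 fun y => u y ^ 2 + v y ^ 2 := (hu.pow 2).add (hv.pow 2)
  refine ⟨9 * C₀ ^ 2 * K / 2 + 1, by positivity, fun r hr => ?_⟩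
  have hlap_le := hcaccioppoli _ r _ hw (fun x => by rw [hΔw]; positivity)
    (by positivity) fun x hx => by
      rw [abs_of_nonneg (by positivity)]
      exact sq_add_sq_le_of_linear_growth (fun x => (hupos x).le) (fun x => (hvpos x).le)
        hgrowth hr (mem_closedBall_zero_iff.mp hx)
  calc (∫ x in ball (0 : E2) r, (‖fderiv ℝ u x‖ ^ 2 + ‖fderiv ℝ v x‖ ^ 2))
      ≤ ∫ x in ball (0 : E2) r, lap (fun y => u y ^ 2 + v y ^ 2) x / 2 := by
        refine integral_mono_of_nonneg (ae_of_all _ fun x => by positivity) ?_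
          (ae_of_all _ fun x => by dsimp only; rw [hΔw]; nlinarith)
        exact ((hw.continuous_lap.div_const 2).continuousOn.integrableOn_compact
          (isCompact_closedBall 0 r)).mono_set ball_subset_closedBall
    _ = (∫ x in ball (0 : E2) r, lap (fun y => u y ^ 2 + v y ^ 2) x) / 2 := integral_div _ _
    _ ≤ (9 * C₀ ^ 2 * K / 2 + 1) * r ^ 2 := by nlinarith [sq_nonneg (C₀ * r)]

/-- For a solution with linear growth, the Dirichlet energy on the ball of radius `r`
grows at most like `r²`. -/
theorem dirichlet_energy_quadratic_bound (u v : E2 → ℝ) (hsol : IsSol u v)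
    (C₀ : ℝ) (hC₀ : 0 < C₀) (hgrowth : ∀ x : E2, u x + v x ≤ C₀ * (1 + ‖x‖)) :
    ∃ C : ℝ, 0 < C ∧ ∀ r : ℝ, 1 ≤ r →
      (∫ x in Metric.ball (0 : E2) r, (‖fderiv ℝ u x‖ ^ 2 + ‖fderiv ℝ v x‖ ^ 2))
        ≤ C * r ^ 2 :=
  dirichlet_energy_quadratic_bound_general u v hsol C₀ hgrowth
end
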